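/- Let $u$ be a smooth function on $\overline{\mathcal{D}} \times [0,T]$, $\mathcal{D} = (0,L)\times(0,B_y)\times(0,B_z)$, vanishing on the lateral boundary $\gamma$ of $\mathcal{D}$ and with $u_x(L,y,z,t)=0$. Then the identity $2\int_{\mathcal{D}} (1+x)\, u\, \Delta u_x \,dV = \int_{\mathcal{S}} u_x^2(0,y,z,t)\,dy\,dz + 3\|u_x\|^2 + \|u_y\|^2 + \|u_z\|^2$ holds, where $\mathcal{S} = (0,B_y)\times(0,B_z)$ and $\Delta = \partial_x^2 + \partial_y^2 + \partial_z^2$. -/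

import Mathlib

open MeasureTheory Set

/-- Partial derivative in the `x` direction. -/
noncomputable def pdx (u : ℝ × ℝ × ℝ → ℝ) (p : ℝ × ℝ × ℝ) : ℝ :=
  deriv (fun s => u (s, p.2)) p.1

/-- Partial derivative in the `y` direction. -/
noncomputable def pdy (u : ℝ × ℝ × ℝ → ℝ) (p : ℝ × ℝ × ℝ) : ℝ :=
  deriv (fun s => u (p.1, s, p.2.2)) p.2.1

/-- Partial derivative in the `z` direction. -/
noncomputable def pdz (u : ℝ × ℝ × ℝ → ℝ) (p : ℝ × ℝ × ℝ) : ℝ :=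
  deriv (fun s => u (p.1, p.2.1, s)) p.2.2

section helpers
variable {E F : Type*} [NormedAddCommGroup E] [NormedSpace ℝ E]
  [NormedAddCommGroup F] [NormedSpace ℝ F]

private lemma contDiff_fderiv_apply {f : E → F} (hf : ContDiff ℝ (⊤ : ℕ∞) f) (v : E) :
    ContDiff ℝ (⊤ : ℕ∞) (fun x => fderiv ℝ f x v) :=
  (ContinuousLinearMap.apply ℝ F v).contDiff.comp (hf.fderiv_right (by simp))

private lemma contDiff_deriv {f : ℝ → ℝ} (hf : ContDiff ℝ (⊤ : ℕ∞) f) :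
    ContDiff ℝ (⊤ : ℕ∞) (deriv f) := by
  have : deriv f = fun x => fderiv ℝ f x 1 := funext fun x => (fderiv_apply_one_eq_deriv).symm
  rw [this]; exact contDiff_fderiv_apply hf 1

end helpers

section pd
variable {u : ℝ × ℝ × ℝ → ℝ}

private lemma hasDerivAt_sliceX (hu : Differentiable ℝ u) (p : ℝ × ℝ × ℝ) :
    HasDerivAt (fun s => u (s, p.2)) (fderiv ℝ u p ((1:ℝ), (0:ℝ), (0:ℝ))) p.1 := by
  have h1 : HasDerivAt (fun s : ℝ => (s, p.2)) ((1:ℝ), (0:ℝ), (0:ℝ)) p.1 :=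
    (hasDerivAt_id p.1).prodMk (hasDerivAt_const p.1 p.2)
  have := (hu (p.1, p.2)).hasFDerivAt.comp_hasDerivAt p.1 h1
  exact this

private lemma hasDerivAt_sliceY (hu : Differentiable ℝ u) (p : ℝ × ℝ × ℝ) :
    HasDerivAt (fun s => u (p.1, s, p.2.2)) (fderiv ℝ u p ((0:ℝ), (1:ℝ), (0:ℝ))) p.2.1 := by
  have h1 : HasDerivAt (fun s : ℝ => (p.1, s, p.2.2)) ((0:ℝ), (1:ℝ), (0:ℝ)) p.2.1 :=
    (hasDerivAt_const p.2.1 p.1).prodMk ((hasDerivAt_id p.2.1).prodMk (hasDerivAt_const p.2.1 p.2.2))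
  have := (hu (p.1, p.2.1, p.2.2)).hasFDerivAt.comp_hasDerivAt p.2.1 h1
  exact this

private lemma hasDerivAt_sliceZ (hu : Differentiable ℝ u) (p : ℝ × ℝ × ℝ) :
    HasDerivAt (fun s => u (p.1, p.2.1, s)) (fderiv ℝ u p ((0:ℝ), (0:ℝ), (1:ℝ))) p.2.2 := by
  have h1 : HasDerivAt (fun s : ℝ => (p.1, p.2.1, s)) ((0:ℝ), (0:ℝ), (1:ℝ)) p.2.2 :=
    (hasDerivAt_const p.2.2 p.1).prodMk ((hasDerivAt_const p.2.2 p.2.1).prodMk (hasDerivAt_id p.2.2))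
  have := (hu (p.1, p.2.1, p.2.2)).hasFDerivAt.comp_hasDerivAt p.2.2 h1
  exact this

private lemma pdx_eq (hu : Differentiable ℝ u) :
    pdx u = fun p => fderiv ℝ u p ((1:ℝ), (0:ℝ), (0:ℝ)) :=
  funext fun p => (hasDerivAt_sliceX hu p).deriv

private lemma pdy_eq (hu : Differentiable ℝ u) :
    pdy u = fun p => fderiv ℝ u p ((0:ℝ), (1:ℝ), (0:ℝ)) :=
  funext fun p => (hasDerivAt_sliceY hu p).deriv

private lemma pdz_eq (hu : Differentiable ℝ u) :
    pdz u = fun p => fderiv ℝ u p ((0:ℝ), (0:ℝ), (1:ℝ)) :=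
  funext fun p => (hasDerivAt_sliceZ hu p).deriv

private lemma contDiff_pdx (hu : ContDiff ℝ (⊤ : ℕ∞) u) : ContDiff ℝ (⊤ : ℕ∞) (pdx u) := by
  rw [pdx_eq (hu.differentiable (by simp))]; exact contDiff_fderiv_apply hu _
private lemma contDiff_pdy (hu : ContDiff ℝ (⊤ : ℕ∞) u) : ContDiff ℝ (⊤ : ℕ∞) (pdy u) := by
  rw [pdy_eq (hu.differentiable (by simp))]; exact contDiff_fderiv_apply hu _
private lemma contDiff_pdz (hu : ContDiff ℝ (⊤ : ℕ∞) u) : ContDiff ℝ (⊤ : ℕ∞) (pdz u) := by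
  rw [pdz_eq (hu.differentiable (by simp))]; exact contDiff_fderiv_apply hu _

private lemma fderiv_fderiv_apply (hu : ContDiff ℝ (⊤ : ℕ∞) u) (p : ℝ × ℝ × ℝ) (v w : ℝ × ℝ × ℝ) :
    fderiv ℝ (fun q => fderiv ℝ u q v) p w = fderiv ℝ (fderiv ℝ u) p w v := by
  have h1 : ContDiff ℝ (⊤ : ℕ∞) (fderiv ℝ u) := hu.fderiv_right (by simp)
  have hh : HasFDerivAt (fderiv ℝ u) (fderiv ℝ (fderiv ℝ u) p) p :=
    (h1.differentiable (by simp) p).hasFDerivAt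
  have h2 : HasFDerivAt (fun q => fderiv ℝ u q v)
      (((ContinuousLinearMap.apply ℝ ℝ v)).comp (fderiv ℝ (fderiv ℝ u) p)) p :=
    (ContinuousLinearMap.apply ℝ ℝ v).hasFDerivAt.comp p hh
  rw [h2.fderiv]; rfl

private lemma clairaut_aux (hu : ContDiff ℝ (⊤ : ℕ∞) u) (p : ℝ × ℝ × ℝ) (v w : ℝ × ℝ × ℝ) :
    fderiv ℝ (fderiv ℝ u) p w v = fderiv ℝ (fderiv ℝ u) p v w := by
  have h1 : ContDiff ℝ (⊤ : ℕ∞) (fderiv ℝ u) := hu.fderiv_right (by simp)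
  exact second_derivative_symmetric (f := u)
    (fun y => (hu.differentiable (by simp) y).hasFDerivAt)
    ((h1.differentiable (by simp) p).hasFDerivAt) w v

private lemma pdy_pdx (hu : ContDiff ℝ (⊤ : ℕ∞) u) (p : ℝ × ℝ × ℝ) :
    pdy (pdx u) p = pdx (pdy u) p := by
  have hd := hu.differentiable (by simp)
  rw [pdy_eq ((contDiff_pdx hu).differentiable (by simp)),
      pdx_eq ((contDiff_pdy hu).differentiable (by simp))]
  simp only [pdx_eq hd, pdy_eq hd]
  rw [fderiv_fderiv_apply hu, fderiv_fderiv_apply hu, clairaut_aux hu]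

private lemma pdz_pdx (hu : ContDiff ℝ (⊤ : ℕ∞) u) (p : ℝ × ℝ × ℝ) :
    pdz (pdx u) p = pdx (pdz u) p := by
  have hd := hu.differentiable (by simp)
  rw [pdz_eq ((contDiff_pdx hu).differentiable (by simp)),
      pdx_eq ((contDiff_pdz hu).differentiable (by simp))]
  simp only [pdx_eq hd, pdz_eq hd]
  rw [fderiv_fderiv_apply hu, fderiv_fderiv_apply hu, clairaut_aux hu]

end pd

section oneD

private lemma ioo_eq_ii {L : ℝ} (hL : 0 < L) (f : ℝ → ℝ) :
    ∫ x in Set.Ioo 0 L, f x = ∫ x in (0:ℝ)..L, f x := by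
  rw [intervalIntegral.integral_of_le hL.le, MeasureTheory.integral_Ioc_eq_integral_Ioo]

private lemma oneD_A {f : ℝ → ℝ} {L : ℝ} (hL : 0 < L) (hf : ContDiff ℝ (⊤ : ℕ∞) f)
    (h0 : f 0 = 0) (hFL : f L = 0) (h'L : deriv f L = 0) :
    ∫ x in Set.Ioo 0 L, (1 + x) * f x * deriv (deriv (deriv f)) x
      = (1/2) * (deriv f 0)^2 + (3/2) * ∫ x in Set.Ioo 0 L, (deriv f x)^2 := by
  set g := deriv f with hg_def
  set h := deriv g with hh_def
  have hg : ContDiff ℝ (⊤ : ℕ∞) g := contDiff_deriv hf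
  have hh : ContDiff ℝ (⊤ : ℕ∞) h := contDiff_deriv hg
  have hdf : ∀ x, HasDerivAt f (g x) x := fun x => (hf.differentiable (by simp) x).hasDerivAt
  have hdg : ∀ x, HasDerivAt g (h x) x := fun x => (hg.differentiable (by simp) x).hasDerivAt
  have hdh : ∀ x, HasDerivAt h (deriv h x) x := fun x => (hh.differentiable (by simp) x).hasDerivAt
  rw [ioo_eq_ii hL, ioo_eq_ii hL]
  have step1 : ∫ x in (0:ℝ)..L, ((1 + x) * f x) * deriv h x
      = ((1+L) * f L) * h L - ((1+0) * f 0) * h 0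
        - ∫ x in (0:ℝ)..L, (1 * f x + (1 + x) * g x) * h x := by
    apply intervalIntegral.integral_mul_deriv_eq_deriv_mul
    · intro x _
      exact (((hasDerivAt_id x).const_add 1).mul (hdf x))
    · intro x _; exact hdh x
    · exact (((continuous_const.mul (hf.continuous)).add
        ((continuous_const.add continuous_id).mul hg.continuous))).intervalIntegrable 0 L
    · exact ((contDiff_deriv hh).continuous).intervalIntegrable 0 L
  have isplit : ∫ x in (0:ℝ)..L, (1 * f x + (1 + x) * g x) * h x
      = (∫ x in (0:ℝ)..L, f x * h x) + ∫ x in (0:ℝ)..L, (1 + x) * (g x * h x) := by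
    have hA : IntervalIntegrable (fun x => f x * h x) volume 0 L :=
      (hf.continuous.mul hh.continuous).intervalIntegrable 0 L
    have hB : IntervalIntegrable (fun x => (1 + x) * (g x * h x)) volume 0 L :=
      ((continuous_const.add continuous_id).mul
        (hg.continuous.mul hh.continuous)).intervalIntegrable 0 L
    have := intervalIntegral.integral_add hA hB
    rw [← this]
    congr 1; funext x; ring
  have step2 : ∫ x in (0:ℝ)..L, f x * h x
      = f L * g L - f 0 * g 0 - ∫ x in (0:ℝ)..L, g x * g x := by
    apply intervalIntegral.integral_mul_deriv_eq_deriv_mul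
    · intro x _; exact hdf x
    · intro x _; exact hdg x
    · exact hg.continuous.intervalIntegrable 0 L
    · exact hh.continuous.intervalIntegrable 0 L
  have step3 : ∫ x in (0:ℝ)..L, (1 + x) * (g x * h x)
      = (1+L) * (g L ^ 2 / 2) - (1+0) * (g 0 ^ 2 / 2)
        - ∫ x in (0:ℝ)..L, 1 * (g x ^ 2 / 2) := by
    apply intervalIntegral.integral_mul_deriv_eq_deriv_mul
      (v := fun x => g x ^ 2 / 2)
    · intro x _; exact (hasDerivAt_id x).const_add 1
    · intro x _
      have H := ((hdg x).pow 2).div_const 2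
      convert H using 1; simp; ring
    · exact continuous_const.intervalIntegrable 0 L
    · exact (hg.continuous.mul hh.continuous).intervalIntegrable 0 L
  have e1 : (∫ x in (0:ℝ)..L, g x ^ 2) = ∫ x in (0:ℝ)..L, g x * g x := by
    congr 1; funext x; ring
  have e2 : (∫ x in (0:ℝ)..L, 1 * (g x ^ 2 / 2)) = (1/2) * ∫ x in (0:ℝ)..L, g x * g x := by
    rw [← intervalIntegral.integral_const_mul]
    congr 1; funext x; ring
  have e3 : (∫ x in (0:ℝ)..L, (1 + x) * f x * deriv (deriv (deriv f)) x)
      = ∫ x in (0:ℝ)..L, ((1 + x) * f x) * deriv h x := by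
    congr 1
  rw [e3, step1, isplit, step2, step3, e1, e2, h0, hFL, h'L]
  ring

private lemma oneD_B {f : ℝ → ℝ} {L : ℝ} (hL : 0 < L) (hf : ContDiff ℝ (⊤ : ℕ∞) f)
    (h0 : f 0 = 0) (hFL : f L = 0) :
    ∫ x in Set.Ioo 0 L, -((1 + x) * (f x * deriv f x))
      = (1/2) * ∫ x in Set.Ioo 0 L, f x ^ 2 := by
  have hg : ContDiff ℝ (⊤ : ℕ∞) (deriv f) := contDiff_deriv hf
  have hdf : ∀ x, HasDerivAt f (deriv f x) x := fun x => (hf.differentiable (by simp) x).hasDerivAt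
  rw [ioo_eq_ii hL, ioo_eq_ii hL]
  have step : ∫ x in (0:ℝ)..L, (1 + x) * (f x * deriv f x)
      = (1+L) * (f L ^ 2 / 2) - (1+0) * (f 0 ^ 2 / 2)
        - ∫ x in (0:ℝ)..L, 1 * (f x ^ 2 / 2) := by
    apply intervalIntegral.integral_mul_deriv_eq_deriv_mul (v := fun x => f x ^ 2 / 2)
    · intro x _; exact (hasDerivAt_id x).const_add 1
    · intro x _
      have H := ((hdf x).pow 2).div_const 2
      convert H using 1; simp; ring
    · exact continuous_const.intervalIntegrable 0 L
    · exact (hf.continuous.mul hg.continuous).intervalIntegrable 0 L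
  have e2 : (∫ x in (0:ℝ)..L, 1 * (f x ^ 2 / 2)) = (1/2) * ∫ x in (0:ℝ)..L, f x ^ 2 := by
    rw [← intervalIntegral.integral_const_mul]
    congr 1; funext x; ring
  rw [intervalIntegral.integral_neg, step, e2, h0, hFL]
  ring

private lemma oneD_C {f w : ℝ → ℝ} {B : ℝ} (hB : 0 < B) (hf : ContDiff ℝ (⊤ : ℕ∞) f)
    (hw : ContDiff ℝ (⊤ : ℕ∞) w) (h0 : f 0 = 0) (hFB : f B = 0) :
    ∫ y in Set.Ioo 0 B, f y * deriv (deriv w) y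
      = -∫ y in Set.Ioo 0 B, deriv f y * deriv w y := by
  have hg : ContDiff ℝ (⊤ : ℕ∞) (deriv f) := contDiff_deriv hf
  have hw1 : ContDiff ℝ (⊤ : ℕ∞) (deriv w) := contDiff_deriv hw
  have hw2 : ContDiff ℝ (⊤ : ℕ∞) (deriv (deriv w)) := contDiff_deriv hw1
  rw [ioo_eq_ii hB, ioo_eq_ii hB]
  have step : ∫ y in (0:ℝ)..B, f y * deriv (deriv w) y
      = f B * deriv w B - f 0 * deriv w 0 - ∫ y in (0:ℝ)..B, deriv f y * deriv w y := by
    apply intervalIntegral.integral_mul_deriv_eq_deriv_mul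
    · intro x _; exact (hf.differentiable (by simp) x).hasDerivAt
    · intro x _; exact (hw1.differentiable (by simp) x).hasDerivAt
    · exact hg.continuous.intervalIntegrable 0 B
    · exact hw2.continuous.intervalIntegrable 0 B
  rw [step, h0, hFB]
  ring

end oneD

section fubini
variable {a b c d e f : ℝ}

private lemma intOn3 {g : ℝ × ℝ × ℝ → ℝ} (hg : Continuous g) :
    IntegrableOn g (Ioo a b ×ˢ Ioo c d ×ˢ Ioo e f) := by
  have : IntegrableOn g (Icc a b ×ˢ Icc c d ×ˢ Icc e f) :=
    hg.continuousOn.integrableOn_compact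
      (isCompact_Icc.prod (isCompact_Icc.prod isCompact_Icc))
  exact this.mono_set
    (prod_mono Ioo_subset_Icc_self (prod_mono Ioo_subset_Icc_self Ioo_subset_Icc_self))

private lemma intOn2 {h : ℝ × ℝ → ℝ} (hh : Continuous h) :
    IntegrableOn h (Ioo c d ×ˢ Ioo e f) := by
  have : IntegrableOn h (Icc c d ×ˢ Icc e f) :=
    hh.continuousOn.integrableOn_compact (isCompact_Icc.prod isCompact_Icc)
  exact this.mono_set (prod_mono Ioo_subset_Icc_self Ioo_subset_Icc_self)

private lemma intOn3' {g : ℝ × ℝ × ℝ → ℝ} (hg : Continuous g) :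
    Integrable g (((volume : Measure ℝ).restrict (Ioo a b)).prod
      ((volume : Measure (ℝ × ℝ)).restrict (Ioo c d ×ˢ Ioo e f))) := by
  rw [Measure.prod_restrict]
  have := intOn3 (a := a) (b := b) (c := c) (d := d) (e := e) (f := f) hg
  rwa [Measure.volume_eq_prod (α := ℝ) (β := ℝ × ℝ)] at this

private lemma split3 {g : ℝ × ℝ × ℝ → ℝ} (hg : Continuous g) :
    ∫ p in Ioo a b ×ˢ Ioo c d ×ˢ Ioo e f, g p
      = ∫ x in Ioo a b, ∫ q in Ioo c d ×ˢ Ioo e f, g (x, q) := by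
  rw [Measure.volume_eq_prod (α := ℝ) (β := ℝ × ℝ)]
  apply setIntegral_prod
  have := intOn3 (a := a) (b := b) (c := c) (d := d) (e := e) (f := f) hg
  rwa [Measure.volume_eq_prod (α := ℝ) (β := ℝ × ℝ)] at this

private lemma swap3 {g : ℝ × ℝ × ℝ → ℝ} (hg : Continuous g) :
    ∫ p in Ioo a b ×ˢ Ioo c d ×ˢ Ioo e f, g p
      = ∫ q in Ioo c d ×ˢ Ioo e f, ∫ x in Ioo a b, g (x, q) := by
  rw [split3 hg]
  exact MeasureTheory.integral_integral_swap (intOn3' hg)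

private lemma integrable_inner3 {g : ℝ × ℝ × ℝ → ℝ} (hg : Continuous g) :
    Integrable (fun q => ∫ x in Ioo a b, g (x, q))
      ((volume : Measure (ℝ × ℝ)).restrict (Ioo c d ×ˢ Ioo e f)) :=
  (intOn3' hg).integral_prod_right

private lemma intOn2' {h : ℝ × ℝ → ℝ} (hh : Continuous h) :
    Integrable h (((volume : Measure ℝ).restrict (Ioo c d)).prod
      ((volume : Measure ℝ).restrict (Ioo e f))) := by
  rw [Measure.prod_restrict]
  have := intOn2 (c := c) (d := d) (e := e) (f := f) hh
  rwa [Measure.volume_eq_prod (α := ℝ) (β := ℝ)] at this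

private lemma split2 {h : ℝ × ℝ → ℝ} (hh : Continuous h) :
    ∫ q in Ioo c d ×ˢ Ioo e f, h q = ∫ y in Ioo c d, ∫ z in Ioo e f, h (y, z) := by
  rw [Measure.volume_eq_prod (α := ℝ) (β := ℝ)]
  apply setIntegral_prod
  have := intOn2 (c := c) (d := d) (e := e) (f := f) hh
  rwa [Measure.volume_eq_prod (α := ℝ) (β := ℝ)] at this

private lemma swap2 {h : ℝ × ℝ → ℝ} (hh : Continuous h) :
    ∫ q in Ioo c d ×ˢ Ioo e f, h q = ∫ z in Ioo e f, ∫ y in Ioo c d, h (y, z) := by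
  rw [split2 hh]
  exact MeasureTheory.integral_integral_swap (intOn2' hh)

end fubini

/-- The weighted integration-by-parts identity for the dispersive operator `Δ∂ₓ`:
`2∫_D (1+x) u Δuₓ = ∫_S uₓ(0,y,z)² + 3‖uₓ‖² + ‖u_y‖² + ‖u_z‖²`. -/
theorem weighted_dispersion_identity (L By Bz : ℝ)
    (hL : 0 < L) (hBy : 0 < By) (hBz : 0 < Bz)
    (u : ℝ × ℝ × ℝ → ℝ) (hu : ContDiff ℝ (⊤ : ℕ∞) u)
    (hbd : ∀ p ∈ frontier (Ioo 0 L ×ˢ Ioo 0 By ×ˢ Ioo 0 Bz), u p = 0)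
    (hxL : ∀ y ∈ Icc 0 By, ∀ z ∈ Icc 0 Bz, pdx u (L, y, z) = 0) :
    2 * ∫ p in Ioo 0 L ×ˢ Ioo 0 By ×ˢ Ioo 0 Bz,
        (1 + p.1) * u p *
          (pdx (pdx (pdx u)) p + pdy (pdy (pdx u)) p + pdz (pdz (pdx u)) p) =
      (∫ q in Ioo 0 By ×ˢ Ioo 0 Bz, (pdx u (0, q)) ^ 2) +
      3 * (∫ p in Ioo 0 L ×ˢ Ioo 0 By ×ˢ Ioo 0 Bz, pdx u p ^ 2) +
      (∫ p in Ioo 0 L ×ˢ Ioo 0 By ×ˢ Ioo 0 Bz, pdy u p ^ 2) +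
      (∫ p in Ioo 0 L ×ˢ Ioo 0 By ×ˢ Ioo 0 Bz, pdz u p ^ 2) := by

  have hux := contDiff_pdx hu
  have huy := contDiff_pdy hu
  have huz := contDiff_pdz hu
  have huxxx := contDiff_pdx (contDiff_pdx hux)
  have huyyx := contDiff_pdy (contDiff_pdy hux)
  have huzzx := contDiff_pdz (contDiff_pdz hux)
  have huxy := contDiff_pdx huy
  have huxz := contDiff_pdx huz
  -- boundary values
  have hcl : closure (Ioo (0:ℝ) L ×ˢ Ioo (0:ℝ) By ×ˢ Ioo (0:ℝ) Bz)
      = Icc (0:ℝ) L ×ˢ Icc (0:ℝ) By ×ˢ Icc (0:ℝ) Bz := by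
    rw [closure_prod_eq, closure_prod_eq, closure_Ioo hL.ne, closure_Ioo hBy.ne,
      closure_Ioo hBz.ne]
  have hzero : ∀ p : ℝ × ℝ × ℝ, p ∈ Icc (0:ℝ) L ×ˢ Icc (0:ℝ) By ×ˢ Icc (0:ℝ) Bz →
      p ∉ Ioo (0:ℝ) L ×ˢ Ioo (0:ℝ) By ×ˢ Ioo (0:ℝ) Bz → u p = 0 := by
    intro p h1 h2
    apply hbd
    rw [frontier, (isOpen_Ioo.prod (isOpen_Ioo.prod isOpen_Ioo)).interior_eq, hcl]
    exact ⟨h1, h2⟩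
  have hb0 : ∀ q : ℝ × ℝ, q.1 ∈ Icc 0 By → q.2 ∈ Icc 0 Bz → u (0, q) = 0 := fun q h1 h2 =>
    hzero _ ⟨left_mem_Icc.mpr hL.le, h1, h2⟩ (fun h => lt_irrefl 0 h.1.1)
  have hbL : ∀ q : ℝ × ℝ, q.1 ∈ Icc 0 By → q.2 ∈ Icc 0 Bz → u (L, q) = 0 := fun q h1 h2 =>
    hzero _ ⟨right_mem_Icc.mpr hL.le, h1, h2⟩ (fun h => lt_irrefl L h.1.2)
  have hy0 : ∀ x ∈ Icc (0:ℝ) L, ∀ z ∈ Icc (0:ℝ) Bz, u (x, 0, z) = 0 := fun x h1 z h2 =>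
    hzero _ ⟨h1, left_mem_Icc.mpr hBy.le, h2⟩ (fun h => lt_irrefl 0 h.2.1.1)
  have hyB : ∀ x ∈ Icc (0:ℝ) L, ∀ z ∈ Icc (0:ℝ) Bz, u (x, By, z) = 0 := fun x h1 z h2 =>
    hzero _ ⟨h1, right_mem_Icc.mpr hBy.le, h2⟩ (fun h => lt_irrefl By h.2.1.2)
  have hz0 : ∀ x ∈ Icc (0:ℝ) L, ∀ y ∈ Icc (0:ℝ) By, u (x, y, 0) = 0 := fun x h1 y h2 =>
    hzero _ ⟨h1, h2, left_mem_Icc.mpr hBz.le⟩ (fun h => lt_irrefl 0 h.2.2.1)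
  have hzB : ∀ x ∈ Icc (0:ℝ) L, ∀ y ∈ Icc (0:ℝ) By, u (x, y, Bz) = 0 := fun x h1 y h2 =>
    hzero _ ⟨h1, h2, right_mem_Icc.mpr hBz.le⟩ (fun h => lt_irrefl Bz h.2.2.2)
  -- boundary values of tangential derivatives on the faces x = 0 and x = L
  have hpdy0 : ∀ q : ℝ × ℝ, q.1 ∈ Ioo 0 By → q.2 ∈ Icc 0 Bz → pdy u (0, q) = 0 := by
    intro q h1 h2
    have hev : (fun t => u (0, t, q.2)) =ᶠ[nhds q.1] fun _ => (0:ℝ) := by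
      filter_upwards [Ioo_mem_nhds h1.1 h1.2] with t ht
      exact hb0 (t, q.2) (Ioo_subset_Icc_self ht) h2
    show deriv (fun t => u (0, t, q.2)) q.1 = 0
    rw [hev.deriv_eq, deriv_const]
  have hpdyL : ∀ q : ℝ × ℝ, q.1 ∈ Ioo 0 By → q.2 ∈ Icc 0 Bz → pdy u (L, q) = 0 := by
    intro q h1 h2
    have hev : (fun t => u (L, t, q.2)) =ᶠ[nhds q.1] fun _ => (0:ℝ) := by
      filter_upwards [Ioo_mem_nhds h1.1 h1.2] with t ht
      exact hbL (t, q.2) (Ioo_subset_Icc_self ht) h2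
    show deriv (fun t => u (L, t, q.2)) q.1 = 0
    rw [hev.deriv_eq, deriv_const]
  have hpdz0 : ∀ q : ℝ × ℝ, q.1 ∈ Icc 0 By → q.2 ∈ Ioo 0 Bz → pdz u (0, q) = 0 := by
    intro q h1 h2
    have hev : (fun t => u (0, q.1, t)) =ᶠ[nhds q.2] fun _ => (0:ℝ) := by
      filter_upwards [Ioo_mem_nhds h2.1 h2.2] with t ht
      exact hb0 (q.1, t) h1 (Ioo_subset_Icc_self ht)
    show deriv (fun t => u (0, q.1, t)) q.2 = 0
    rw [hev.deriv_eq, deriv_const]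
  have hpdzL : ∀ q : ℝ × ℝ, q.1 ∈ Icc 0 By → q.2 ∈ Ioo 0 Bz → pdz u (L, q) = 0 := by
    intro q h1 h2
    have hev : (fun t => u (L, q.1, t)) =ᶠ[nhds q.2] fun _ => (0:ℝ) := by
      filter_upwards [Ioo_mem_nhds h2.1 h2.2] with t ht
      exact hbL (q.1, t) h1 (Ioo_subset_Icc_self ht)
    show deriv (fun t => u (L, q.1, t)) q.2 = 0
    rw [hev.deriv_eq, deriv_const]
  -- continuity of the various integrands
  have cG1 : Continuous fun p : ℝ × ℝ × ℝ => (1 + p.1) * u p * pdx (pdx (pdx u)) p :=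
    ((continuous_const.add continuous_fst).mul hu.continuous).mul huxxx.continuous
  have cG2 : Continuous fun p : ℝ × ℝ × ℝ => (1 + p.1) * u p * pdy (pdy (pdx u)) p :=
    ((continuous_const.add continuous_fst).mul hu.continuous).mul huyyx.continuous
  have cG3 : Continuous fun p : ℝ × ℝ × ℝ => (1 + p.1) * u p * pdz (pdz (pdx u)) p :=
    ((continuous_const.add continuous_fst).mul hu.continuous).mul huzzx.continuous
  have cK2 : Continuous fun p : ℝ × ℝ × ℝ => -((1 + p.1) * (pdy u p * pdx (pdy u) p)) :=
    ((continuous_const.add continuous_fst).mul (huy.continuous.mul huxy.continuous)).neg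
  have cK3 : Continuous fun p : ℝ × ℝ × ℝ => -((1 + p.1) * (pdz u p * pdx (pdz u) p)) :=
    ((continuous_const.add continuous_fst).mul (huz.continuous.mul huxz.continuous)).neg
  have cX2 : Continuous fun p : ℝ × ℝ × ℝ => pdx u p ^ 2 := hux.continuous.pow 2
  have cY2 : Continuous fun p : ℝ × ℝ × ℝ => pdy u p ^ 2 := huy.continuous.pow 2
  have cZ2 : Continuous fun p : ℝ × ℝ × ℝ => pdz u p ^ 2 := huz.continuous.pow 2
  have meas2 : MeasurableSet (Ioo (0:ℝ) By ×ˢ Ioo (0:ℝ) Bz) :=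
    measurableSet_Ioo.prod measurableSet_Ioo
  have meas3 : MeasurableSet (Ioo (0:ℝ) L ×ˢ Ioo (0:ℝ) By ×ˢ Ioo (0:ℝ) Bz) :=
    measurableSet_Ioo.prod meas2
  -- Claim A : third x-derivative term
  have claimA : (∫ p in Ioo (0:ℝ) L ×ˢ Ioo (0:ℝ) By ×ˢ Ioo (0:ℝ) Bz,
        (1 + p.1) * u p * pdx (pdx (pdx u)) p)
      = (1/2) * (∫ q in Ioo (0:ℝ) By ×ˢ Ioo (0:ℝ) Bz, (pdx u (0, q)) ^ 2)
        + (3/2) * ∫ p in Ioo (0:ℝ) L ×ˢ Ioo (0:ℝ) By ×ˢ Ioo (0:ℝ) Bz, pdx u p ^ 2 := by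
    have hpt : EqOn
        (fun q : ℝ × ℝ => ∫ x in Ioo (0:ℝ) L, (1 + x) * u (x, q) * pdx (pdx (pdx u)) (x, q))
        (fun q : ℝ × ℝ => (1/2) * (pdx u (0, q)) ^ 2
          + (3/2) * ∫ x in Ioo (0:ℝ) L, pdx u (x, q) ^ 2)
        (Ioo (0:ℝ) By ×ˢ Ioo (0:ℝ) Bz) := by
      intro q hq
      have hy := Ioo_subset_Icc_self hq.1
      have hz := Ioo_subset_Icc_self hq.2
      have hf : ContDiff ℝ (⊤ : ℕ∞) (fun s => u (s, q)) := hu.comp (contDiff_id.prodMk contDiff_const)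
      exact oneD_A hL hf (hb0 q hy hz) (hbL q hy hz) (hxL q.1 hy q.2 hz)
    calc (∫ p in Ioo (0:ℝ) L ×ˢ Ioo (0:ℝ) By ×ˢ Ioo (0:ℝ) Bz,
            (1 + p.1) * u p * pdx (pdx (pdx u)) p)
        = ∫ q in Ioo (0:ℝ) By ×ˢ Ioo (0:ℝ) Bz,
            ∫ x in Ioo (0:ℝ) L, (1 + x) * u (x, q) * pdx (pdx (pdx u)) (x, q) := swap3 cG1
      _ = ∫ q in Ioo (0:ℝ) By ×ˢ Ioo (0:ℝ) Bz,
            ((1/2) * (pdx u (0, q)) ^ 2 + (3/2) * ∫ x in Ioo (0:ℝ) L, pdx u (x, q) ^ 2) :=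
          setIntegral_congr_fun meas2 hpt
      _ = (∫ q in Ioo (0:ℝ) By ×ˢ Ioo (0:ℝ) Bz, (1/2) * (pdx u (0, q)) ^ 2)
            + ∫ q in Ioo (0:ℝ) By ×ˢ Ioo (0:ℝ) Bz,
                (3/2) * ∫ x in Ioo (0:ℝ) L, pdx u (x, q) ^ 2 := by
          apply integral_add
          · exact (intOn2 (continuous_const.mul
              ((hux.continuous.comp (continuous_const.prodMk continuous_id)).pow 2)))
          · exact (integrable_inner3 cX2).const_mul (3/2)
      _ = (1/2) * (∫ q in Ioo (0:ℝ) By ×ˢ Ioo (0:ℝ) Bz, (pdx u (0, q)) ^ 2)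
            + (3/2) * ∫ p in Ioo (0:ℝ) L ×ˢ Ioo (0:ℝ) By ×ˢ Ioo (0:ℝ) Bz, pdx u p ^ 2 := by
          rw [integral_const_mul, integral_const_mul]
          congr 2
          exact (swap3 cX2).symm
  -- Claim B : the y-term
  have claimB1 : (∫ p in Ioo (0:ℝ) L ×ˢ Ioo (0:ℝ) By ×ˢ Ioo (0:ℝ) Bz,
        (1 + p.1) * u p * pdy (pdy (pdx u)) p)
      = ∫ p in Ioo (0:ℝ) L ×ˢ Ioo (0:ℝ) By ×ˢ Ioo (0:ℝ) Bz,
          -((1 + p.1) * (pdy u p * pdx (pdy u) p)) := by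
    rw [split3 cG2, split3 cK2]
    apply setIntegral_congr_fun measurableSet_Ioo
    intro x hx
    have hxI := Ioo_subset_Icc_self hx
    calc (∫ q in Ioo (0:ℝ) By ×ˢ Ioo (0:ℝ) Bz,
            (1 + x) * u (x, q) * pdy (pdy (pdx u)) (x, q))
        = ∫ z in Ioo (0:ℝ) Bz, ∫ y in Ioo (0:ℝ) By,
            (1 + x) * u (x, y, z) * pdy (pdy (pdx u)) (x, y, z) :=
          swap2 (cG2.comp (continuous_const.prodMk continuous_id))
      _ = ∫ z in Ioo (0:ℝ) Bz, ∫ y in Ioo (0:ℝ) By,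
            -((1 + x) * (pdy u (x, y, z) * pdx (pdy u) (x, y, z))) := by
          apply setIntegral_congr_fun measurableSet_Ioo
          intro z hz
          have hzI := Ioo_subset_Icc_self hz
          have hfy : ContDiff ℝ (⊤ : ℕ∞) (fun t => u (x, t, z)) :=
            hu.comp (contDiff_const.prodMk (contDiff_id.prodMk contDiff_const))
          have hwy : ContDiff ℝ (⊤ : ℕ∞) (fun t => pdx u (x, t, z)) :=
            hux.comp (contDiff_const.prodMk (contDiff_id.prodMk contDiff_const))
          have key : (∫ y in Ioo (0:ℝ) By, u (x, y, z) * pdy (pdy (pdx u)) (x, y, z))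
              = -∫ y in Ioo (0:ℝ) By, pdy u (x, y, z) * pdy (pdx u) (x, y, z) :=
            oneD_C hBy hfy hwy (hy0 x hxI z hzI) (hyB x hxI z hzI)
          have key2 : (∫ y in Ioo (0:ℝ) By, pdy u (x, y, z) * pdy (pdx u) (x, y, z))
              = ∫ y in Ioo (0:ℝ) By, pdy u (x, y, z) * pdx (pdy u) (x, y, z) := by
            apply setIntegral_congr_fun measurableSet_Ioo
            intro y hy
            simp only [pdy_pdx hu]
          calc (∫ y in Ioo (0:ℝ) By, (1 + x) * u (x, y, z) * pdy (pdy (pdx u)) (x, y, z))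
              = ∫ y in Ioo (0:ℝ) By,
                  (1 + x) * (u (x, y, z) * pdy (pdy (pdx u)) (x, y, z)) := by
                congr 1; funext y; ring
            _ = (1 + x) * ∫ y in Ioo (0:ℝ) By, u (x, y, z) * pdy (pdy (pdx u)) (x, y, z) :=
                integral_const_mul _ _
            _ = (1 + x) * -(∫ y in Ioo (0:ℝ) By, pdy u (x, y, z) * pdx (pdy u) (x, y, z)) := by
                rw [key, key2]
            _ = ∫ y in Ioo (0:ℝ) By,
                  -((1 + x) * (pdy u (x, y, z) * pdx (pdy u) (x, y, z))) := by
                rw [integral_neg, integral_const_mul]; ring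
      _ = ∫ q in Ioo (0:ℝ) By ×ˢ Ioo (0:ℝ) Bz,
            -((1 + x) * (pdy u (x, q) * pdx (pdy u) (x, q))) :=
          (swap2 (cK2.comp (continuous_const.prodMk continuous_id))).symm
  have claimB2 : (∫ p in Ioo (0:ℝ) L ×ˢ Ioo (0:ℝ) By ×ˢ Ioo (0:ℝ) Bz,
        -((1 + p.1) * (pdy u p * pdx (pdy u) p)))
      = (1/2) * ∫ p in Ioo (0:ℝ) L ×ˢ Ioo (0:ℝ) By ×ˢ Ioo (0:ℝ) Bz, pdy u p ^ 2 := by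
    have hpt : EqOn
        (fun q : ℝ × ℝ => ∫ x in Ioo (0:ℝ) L,
          -((1 + x) * (pdy u (x, q) * pdx (pdy u) (x, q))))
        (fun q : ℝ × ℝ => (1/2) * ∫ x in Ioo (0:ℝ) L, pdy u (x, q) ^ 2)
        (Ioo (0:ℝ) By ×ˢ Ioo (0:ℝ) Bz) := by
      intro q hq
      have hf : ContDiff ℝ (⊤ : ℕ∞) (fun s => pdy u (s, q)) :=
        huy.comp (contDiff_id.prodMk contDiff_const)
      exact oneD_B hL hf (hpdy0 q hq.1 (Ioo_subset_Icc_self hq.2))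
        (hpdyL q hq.1 (Ioo_subset_Icc_self hq.2))
    calc (∫ p in Ioo (0:ℝ) L ×ˢ Ioo (0:ℝ) By ×ˢ Ioo (0:ℝ) Bz,
            -((1 + p.1) * (pdy u p * pdx (pdy u) p)))
        = ∫ q in Ioo (0:ℝ) By ×ˢ Ioo (0:ℝ) Bz,
            ∫ x in Ioo (0:ℝ) L, -((1 + x) * (pdy u (x, q) * pdx (pdy u) (x, q))) := swap3 cK2
      _ = ∫ q in Ioo (0:ℝ) By ×ˢ Ioo (0:ℝ) Bz,
            (1/2) * ∫ x in Ioo (0:ℝ) L, pdy u (x, q) ^ 2 := setIntegral_congr_fun meas2 hpt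
      _ = (1/2) * ∫ p in Ioo (0:ℝ) L ×ˢ Ioo (0:ℝ) By ×ˢ Ioo (0:ℝ) Bz, pdy u p ^ 2 := by
          rw [integral_const_mul]
          congr 1
          exact (swap3 cY2).symm
  -- Claim C : the z-term
  have claimC1 : (∫ p in Ioo (0:ℝ) L ×ˢ Ioo (0:ℝ) By ×ˢ Ioo (0:ℝ) Bz,
        (1 + p.1) * u p * pdz (pdz (pdx u)) p)
      = ∫ p in Ioo (0:ℝ) L ×ˢ Ioo (0:ℝ) By ×ˢ Ioo (0:ℝ) Bz,
          -((1 + p.1) * (pdz u p * pdx (pdz u) p)) := by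
    rw [split3 cG3, split3 cK3]
    apply setIntegral_congr_fun measurableSet_Ioo
    intro x hx
    have hxI := Ioo_subset_Icc_self hx
    calc (∫ q in Ioo (0:ℝ) By ×ˢ Ioo (0:ℝ) Bz,
            (1 + x) * u (x, q) * pdz (pdz (pdx u)) (x, q))
        = ∫ y in Ioo (0:ℝ) By, ∫ z in Ioo (0:ℝ) Bz,
            (1 + x) * u (x, y, z) * pdz (pdz (pdx u)) (x, y, z) :=
          split2 (cG3.comp (continuous_const.prodMk continuous_id))
      _ = ∫ y in Ioo (0:ℝ) By, ∫ z in Ioo (0:ℝ) Bz,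
            -((1 + x) * (pdz u (x, y, z) * pdx (pdz u) (x, y, z))) := by
          apply setIntegral_congr_fun measurableSet_Ioo
          intro y hy
          have hyI := Ioo_subset_Icc_self hy
          have hfz : ContDiff ℝ (⊤ : ℕ∞) (fun t => u (x, y, t)) :=
            hu.comp (contDiff_const.prodMk (contDiff_const.prodMk contDiff_id))
          have hwz : ContDiff ℝ (⊤ : ℕ∞) (fun t => pdx u (x, y, t)) :=
            hux.comp (contDiff_const.prodMk (contDiff_const.prodMk contDiff_id))
          have key : (∫ z in Ioo (0:ℝ) Bz, u (x, y, z) * pdz (pdz (pdx u)) (x, y, z))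
              = -∫ z in Ioo (0:ℝ) Bz, pdz u (x, y, z) * pdz (pdx u) (x, y, z) :=
            oneD_C hBz hfz hwz (hz0 x hxI y hyI) (hzB x hxI y hyI)
          have key2 : (∫ z in Ioo (0:ℝ) Bz, pdz u (x, y, z) * pdz (pdx u) (x, y, z))
              = ∫ z in Ioo (0:ℝ) Bz, pdz u (x, y, z) * pdx (pdz u) (x, y, z) := by
            apply setIntegral_congr_fun measurableSet_Ioo
            intro z hz
            simp only [pdz_pdx hu]
          calc (∫ z in Ioo (0:ℝ) Bz, (1 + x) * u (x, y, z) * pdz (pdz (pdx u)) (x, y, z))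
              = ∫ z in Ioo (0:ℝ) Bz,
                  (1 + x) * (u (x, y, z) * pdz (pdz (pdx u)) (x, y, z)) := by
                congr 1; funext z; ring
            _ = (1 + x) * ∫ z in Ioo (0:ℝ) Bz, u (x, y, z) * pdz (pdz (pdx u)) (x, y, z) :=
                integral_const_mul _ _
            _ = (1 + x) * -(∫ z in Ioo (0:ℝ) Bz, pdz u (x, y, z) * pdx (pdz u) (x, y, z)) := by
                rw [key, key2]
            _ = ∫ z in Ioo (0:ℝ) Bz,
                  -((1 + x) * (pdz u (x, y, z) * pdx (pdz u) (x, y, z))) := by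
                rw [integral_neg, integral_const_mul]; ring
      _ = ∫ q in Ioo (0:ℝ) By ×ˢ Ioo (0:ℝ) Bz,
            -((1 + x) * (pdz u (x, q) * pdx (pdz u) (x, q))) :=
          (split2 (cK3.comp (continuous_const.prodMk continuous_id))).symm
  have claimC2 : (∫ p in Ioo (0:ℝ) L ×ˢ Ioo (0:ℝ) By ×ˢ Ioo (0:ℝ) Bz,
        -((1 + p.1) * (pdz u p * pdx (pdz u) p)))
      = (1/2) * ∫ p in Ioo (0:ℝ) L ×ˢ Ioo (0:ℝ) By ×ˢ Ioo (0:ℝ) Bz, pdz u p ^ 2 := by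
    have hpt : EqOn
        (fun q : ℝ × ℝ => ∫ x in Ioo (0:ℝ) L,
          -((1 + x) * (pdz u (x, q) * pdx (pdz u) (x, q))))
        (fun q : ℝ × ℝ => (1/2) * ∫ x in Ioo (0:ℝ) L, pdz u (x, q) ^ 2)
        (Ioo (0:ℝ) By ×ˢ Ioo (0:ℝ) Bz) := by
      intro q hq
      have hf : ContDiff ℝ (⊤ : ℕ∞) (fun s => pdz u (s, q)) :=
        huz.comp (contDiff_id.prodMk contDiff_const)
      exact oneD_B hL hf (hpdz0 q (Ioo_subset_Icc_self hq.1) hq.2)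
        (hpdzL q (Ioo_subset_Icc_self hq.1) hq.2)
    calc (∫ p in Ioo (0:ℝ) L ×ˢ Ioo (0:ℝ) By ×ˢ Ioo (0:ℝ) Bz,
            -((1 + p.1) * (pdz u p * pdx (pdz u) p)))
        = ∫ q in Ioo (0:ℝ) By ×ˢ Ioo (0:ℝ) Bz,
            ∫ x in Ioo (0:ℝ) L, -((1 + x) * (pdz u (x, q) * pdx (pdz u) (x, q))) := swap3 cK3
      _ = ∫ q in Ioo (0:ℝ) By ×ˢ Ioo (0:ℝ) Bz,
            (1/2) * ∫ x in Ioo (0:ℝ) L, pdz u (x, q) ^ 2 := setIntegral_congr_fun meas2 hpt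
      _ = (1/2) * ∫ p in Ioo (0:ℝ) L ×ˢ Ioo (0:ℝ) By ×ˢ Ioo (0:ℝ) Bz, pdz u p ^ 2 := by
          rw [integral_const_mul]
          congr 1
          exact (swap3 cZ2).symm
  -- split the integral of the sum
  have hsum : (∫ p in Ioo (0:ℝ) L ×ˢ Ioo (0:ℝ) By ×ˢ Ioo (0:ℝ) Bz,
        (1 + p.1) * u p *
          (pdx (pdx (pdx u)) p + pdy (pdy (pdx u)) p + pdz (pdz (pdx u)) p))
      = (∫ p in Ioo (0:ℝ) L ×ˢ Ioo (0:ℝ) By ×ˢ Ioo (0:ℝ) Bz,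
          (1 + p.1) * u p * pdx (pdx (pdx u)) p)
        + ((∫ p in Ioo (0:ℝ) L ×ˢ Ioo (0:ℝ) By ×ˢ Ioo (0:ℝ) Bz,
            (1 + p.1) * u p * pdy (pdy (pdx u)) p)
          + ∫ p in Ioo (0:ℝ) L ×ˢ Ioo (0:ℝ) By ×ˢ Ioo (0:ℝ) Bz,
              (1 + p.1) * u p * pdz (pdz (pdx u)) p) := by
    have e : EqOn
        (fun p : ℝ × ℝ × ℝ => (1 + p.1) * u p *
          (pdx (pdx (pdx u)) p + pdy (pdy (pdx u)) p + pdz (pdz (pdx u)) p))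
        (fun p : ℝ × ℝ × ℝ => (1 + p.1) * u p * pdx (pdx (pdx u)) p
          + ((1 + p.1) * u p * pdy (pdy (pdx u)) p
            + (1 + p.1) * u p * pdz (pdz (pdx u)) p))
        (Ioo (0:ℝ) L ×ˢ Ioo (0:ℝ) By ×ˢ Ioo (0:ℝ) Bz) := fun p _ => by ring
    have h23i : IntegrableOn
        (fun p : ℝ × ℝ × ℝ => (1 + p.1) * u p * pdy (pdy (pdx u)) p
          + (1 + p.1) * u p * pdz (pdz (pdx u)) p)
        (Ioo (0:ℝ) L ×ˢ Ioo (0:ℝ) By ×ˢ Ioo (0:ℝ) Bz) := (intOn3 cG2).add (intOn3 cG3)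
    rw [setIntegral_congr_fun meas3 e,
      integral_add (intOn3 cG1) h23i,
      integral_add (intOn3 cG2) (intOn3 cG3)]
  rw [hsum, claimA, claimB1.trans claimB2, claimC1.trans claimC2]
  ring
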